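/- arXiv:1502.06243 — 6 statements merged into one kernel-verified Lean document; each statement's English description precedes it below -/
import Mathlib

section
/- Let Δ be a countable discrete group and let v, w : Δ → ℝ satisfy Σ_{δ∈Δ} |v(δ)| < ∞ and Σ_{δ∈Δ} |w(δ)| < ∞. If the convolution v·w equals δ_e, the indicator function of the identity element, then also w·v = δ_e; that is, the convolution algebra ℓ¹(Δ,ℝ) is directly finite. -/
/-!
If `v ⋆ w = δ_e`, then `p = w ⋆ v` is idempotent and `p(e) = (v ⋆ w)(e) = 1`, so `q = δ_e - p`
is an idempotent of trace `q(e) = 0`; Kaplansky's argument shows that such a `q` vanishes.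
Left convolution by `q` is a bounded idempotent `Q` on `ℓ²(Δ)` commuting with right translations,
hence the orthogonal projection `P` onto its fixed space `K` commutes with them too. So
`u = P δ_e` satisfies `u(γ⁻¹) = u(γ)`, which turns `u(e) = (Q u)(e) = ∑ q(δ) u(δ⁻¹)` into
`⟪u, Q δ_e⟫ = ⟪δ_e, Q δ_e⟫ = q(e) = 0`. Hence `‖u‖² = u(e) = 0`, so every `δ_γ`, a right
translate of `δ_e`, is orthogonal to `K ∋ Q δ_e`, and `q = Q δ_e = 0`.
-/

lemma abs_le_tsum_abs {ι : Type*} {a : ι → ℝ} (ha : Summable a) (i : ι) :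
    |a i| ≤ ∑' j, |a j| :=
  ha.abs.le_tsum i fun _ _ ↦ abs_nonneg _

lemma summable_mul_comp_of_abs_le {ι κ : Type*} {a : ι → ℝ} {c : κ → ℝ} {M : ℝ}
    (ha : Summable a) (hc : ∀ k, |c k| ≤ M) (f : ι → κ) : Summable fun i ↦ a i * c (f i) :=
  .of_norm_bounded (ha.abs.mul_right M) fun i ↦ by
    rw [Real.norm_eq_abs, abs_mul]
    exact mul_le_mul_of_nonneg_left (hc _) (abs_nonneg _)

section Reindex

variable {𝕜 ι E : Type*} [NormedField 𝕜] [NormedAddCommGroup E] [NormedSpace 𝕜 E]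
  {p : ENNReal}

lemma memℓp_comp_equiv (hp : 0 < p.toReal) {x : ι → E} (hx : Memℓp x p) (e : ι ≃ ι) :
    Memℓp (x ∘ e) p :=
  memℓp_gen <| e.summable_iff.2 <| (memℓp_gen_iff hp).1 hx

variable [Fact (1 ≤ p)]

noncomputable def lpCompEquiv (hp : 0 < p.toReal) (e : ι ≃ ι) :
    lp (fun _ : ι ↦ E) p ≃ₗᵢ[𝕜] lp (fun _ : ι ↦ E) p where
  toFun x := ⟨x ∘ e, memℓp_comp_equiv hp x.2 e⟩
  invFun x := ⟨x ∘ e.symm, memℓp_comp_equiv hp x.2 e.symm⟩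
  left_inv x := by ext; simp
  right_inv x := by ext; simp
  map_add' _ _ := rfl
  map_smul' _ _ := rfl
  norm_map' x := by
    simp only [lp.norm_eq_tsum_rpow hp]
    congr 1
    exact e.tsum_eq fun i ↦ ‖x i‖ ^ p.toReal

end Reindex

open scoped RealInnerProductSpace

section

variable {ι : Type*} [DecidableEq ι]

lemma lp.inner_single_one_left (i : ι) (x : lp (fun _ : ι ↦ ℝ) 2) :
    ⟪lp.single 2 i (1 : ℝ), x⟫ = x i := by
  simp [lp.inner_single_left]

lemma lp.inner_single_one_right (i : ι) (x : lp (fun _ : ι ↦ ℝ) 2) :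
    ⟪x, lp.single 2 i (1 : ℝ)⟫ = x i := by
  simp [lp.inner_single_right]

end

lemma Submodule.inner_starProjection_left_of_mem {E : Type*} [NormedAddCommGroup E]
    [InnerProductSpace ℝ E] (K : Submodule ℝ E) [K.HasOrthogonalProjection] {x : E} (hx : x ∈ K)
    (y : E) : ⟪K.starProjection y, x⟫ = ⟪y, x⟫ := by
  rw [K.inner_starProjection_left_eq_right, K.starProjection_eq_self_iff.2 hx]

namespace L1Conv

variable {Δ : Type*} [Group Δ]

noncomputable def conv (a b : Δ → ℝ) (γ : Δ) : ℝ := ∑' δ, a δ * b (δ⁻¹ * γ)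

lemma summable_conv_kernel {a b c : Δ → ℝ} {M : ℝ} (ha : Summable a) (hb : Summable b)
    (hc : ∀ τ, |c τ| ≤ M) : Summable fun p : Δ × Δ ↦ a p.1 * b (p.1⁻¹ * p.2) * c p.2 := by
  -- along the shear `(δ, β) ↦ (δ, δ * β)` the kernel becomes `a δ * b β * c (δ * β)`
  have hab : Summable fun p : Δ × Δ ↦ |a p.1 * b p.2| := by
    simpa only [abs_mul] using ha.abs.mul_of_nonneg hb.abs (fun _ ↦ abs_nonneg _)
      fun _ ↦ abs_nonneg _
  have hsheared := summable_mul_comp_of_abs_le (summable_abs_iff.1 hab) hc fun p ↦ p.1 * p.2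
  rw [← ((Equiv.refl Δ).prodShear fun δ ↦ Equiv.mulLeft δ).summable_iff]
  simpa [Function.comp_def] using hsheared

lemma summable_conv {a b : Δ → ℝ} (ha : Summable a) (hb : Summable b) :
    Summable (conv a b) := by
  have hK := summable_conv_kernel (c := fun _ ↦ 1) ha hb (M := 1) fun _ ↦ by simp
  exact hK.prod_symm.prod.congr fun γ ↦ by simp [conv]

lemma conv_assoc {a b c : Δ → ℝ} {M : ℝ} (ha : Summable a) (hb : Summable b)
    (hc : ∀ x, |c x| ≤ M) : conv (conv a b) c = conv a (conv b c) := by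
  funext γ
  have hK := summable_conv_kernel (c := fun τ ↦ c (τ⁻¹ * γ)) ha hb fun _ ↦ hc _
  calc conv (conv a b) c γ
      = ∑' τ, ∑' δ, a δ * b (δ⁻¹ * τ) * c (τ⁻¹ * γ) := by
        simp only [conv, ← tsum_mul_right]
    _ = ∑' δ, ∑' τ, a δ * b (δ⁻¹ * τ) * c (τ⁻¹ * γ) := hK.tsum_comm
    _ = ∑' δ, a δ * ∑' β, b β * c (β⁻¹ * (δ⁻¹ * γ)) := by
        refine tsum_congr fun δ ↦ ?_
        rw [← tsum_mul_left, ← (Equiv.mulLeft δ).tsum_eq]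
        simp [mul_assoc]
    _ = conv a (conv b c) γ := rfl

lemma conv_sub_left {a a' c : Δ → ℝ} {M : ℝ} (ha : Summable a) (ha' : Summable a')
    (hc : ∀ x, |c x| ≤ M) : conv (a - a') c = conv a c - conv a' c := by
  funext γ
  simp only [conv, Pi.sub_apply, sub_mul]
  exact (summable_mul_comp_of_abs_le ha hc _).tsum_sub (summable_mul_comp_of_abs_le ha' hc _)

lemma conv_sub_right {a c c' : Δ → ℝ} {M M' : ℝ} (ha : Summable a)
    (hc : ∀ x, |c x| ≤ M) (hc' : ∀ x, |c' x| ≤ M') : conv a (c - c') = conv a c - conv a c' := by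
  funext γ
  simp only [conv, Pi.sub_apply, mul_sub]
  exact (summable_mul_comp_of_abs_le ha hc _).tsum_sub (summable_mul_comp_of_abs_le ha hc' _)

lemma conv_apply_one_comm (a b : Δ → ℝ) : conv a b 1 = conv b a 1 := by
  rw [conv, ← (Equiv.inv Δ).tsum_eq]
  simp [conv, mul_comm]

section Unit

variable [DecidableEq Δ]

lemma summable_single_one : Summable (Pi.single (1 : Δ) (1 : ℝ)) :=
  (hasSum_pi_single 1 1).summable

@[simp] lemma single_conv (a : Δ → ℝ) : conv (Pi.single 1 1) a = a := by
  funext γ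
  rw [conv, tsum_eq_single 1 fun δ hδ ↦ by simp [hδ]]
  simp

@[simp] lemma conv_single (a : Δ → ℝ) : conv a (Pi.single 1 1) = a := by
  funext γ
  rw [conv, tsum_eq_single γ fun δ hδ ↦ by simp [inv_mul_eq_one, hδ]]
  simp

lemma conv_swap_idempotent {v w : Δ → ℝ} (hv : Summable v) (hw : Summable w)
    (hvw : conv v w = Pi.single 1 1) : conv (conv w v) (conv w v) = conv w v := by
  have hvwv : conv v (conv w v) = v := by
    rw [← conv_assoc hv hw (abs_le_tsum_abs hv), hvw, single_conv]
  rw [conv_assoc hw hv (abs_le_tsum_abs (summable_conv hw hv)), hvwv]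

end Unit

local notation "ℓ²" => lp (fun _ : Δ ↦ ℝ) 2

noncomputable def leftTranslate (δ : Δ) : ℓ² ≃ₗᵢ[ℝ] ℓ² :=
  lpCompEquiv (by norm_num) (Equiv.mulLeft δ⁻¹)

noncomputable def rightTranslate (σ : Δ) : ℓ² ≃ₗᵢ[ℝ] ℓ² :=
  lpCompEquiv (by norm_num) (Equiv.mulRight σ)

@[simp] lemma leftTranslate_apply (δ : Δ) (x : ℓ²) (γ : Δ) :
    leftTranslate δ x γ = x (δ⁻¹ * γ) := rfl

@[simp] lemma rightTranslate_apply (σ : Δ) (x : ℓ²) (γ : Δ) :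
    rightTranslate σ x γ = x (γ * σ) := rfl

noncomputable def convOp (q : Δ → ℝ) : ℓ² →L[ℝ] ℓ² :=
  ∑' δ, q δ • (leftTranslate δ).toLinearIsometry.toContinuousLinearMap

lemma coe_convOp {q : Δ → ℝ} (hq : Summable q) (x : ℓ²) : ⇑(convOp q x) = conv q x := by
  have hs : Summable fun δ ↦ q δ • (leftTranslate δ).toLinearIsometry.toContinuousLinearMap := by
    refine .of_norm_bounded hq.abs fun δ ↦ ?_
    rw [norm_smul, Real.norm_eq_abs]
    exact mul_le_of_le_one_right (abs_nonneg _) (LinearIsometry.norm_toContinuousLinearMap_le _)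
  funext γ
  have := ((lp.evalCLM ℝ (fun _ : Δ ↦ ℝ) 2 γ).comp (ContinuousLinearMap.apply ℝ ℓ² x)).map_tsum hs
  simpa [convOp, lp.evalCLM, conv] using this

lemma convOp_rightTranslate {q : Δ → ℝ} (hq : Summable q) (σ : Δ) (x : ℓ²) :
    convOp q (rightTranslate σ x) = rightTranslate σ (convOp q x) := by
  ext γ
  simp [coe_convOp hq, conv, mul_assoc]

lemma convOp_convOp {q : Δ → ℝ} (hq : Summable q) (hqq : conv q q = q) (x : ℓ²) :
    convOp q (convOp q x) = convOp q x := by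
  have hx : ∀ γ, |x γ| ≤ ‖x‖ := lp.norm_apply_le_norm two_ne_zero x
  ext1
  rw [coe_convOp hq, coe_convOp hq, ← conv_assoc hq hq hx, hqq]

noncomputable def fixedSpace (q : Δ → ℝ) : Submodule ℝ ℓ² :=
  LinearMap.eqLocus (convOp q : ℓ² →ₗ[ℝ] ℓ²) LinearMap.id

lemma mem_fixedSpace {q : Δ → ℝ} {x : ℓ²} : x ∈ fixedSpace q ↔ convOp q x = x :=
  LinearMap.mem_eqLocus

lemma isClosed_fixedSpace (q : Δ → ℝ) : IsClosed (fixedSpace q : Set ℓ²) :=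
  isClosed_eq (convOp q).continuous continuous_id

instance (q : Δ → ℝ) : (fixedSpace q).HasOrthogonalProjection :=
  have := (isClosed_fixedSpace q).completeSpace_coe
  inferInstance

lemma map_rightTranslate_fixedSpace {q : Δ → ℝ} (hq : Summable q) (σ : Δ) :
    (fixedSpace q).map ((rightTranslate σ).toLinearEquiv : ℓ² →ₗ[ℝ] ℓ²) = fixedSpace q := by
  have hmem : ∀ σ x, x ∈ fixedSpace q → rightTranslate σ x ∈ fixedSpace q := fun σ x hx ↦ by
    rw [mem_fixedSpace] at hx ⊢
    rw [convOp_rightTranslate hq, hx]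
  refine le_antisymm ?_ fun x hx ↦ ⟨rightTranslate σ⁻¹ x, hmem _ _ hx, ?_⟩
  · rintro _ ⟨x, hx, rfl⟩
    exact hmem σ x hx
  · ext γ
    simp

lemma starProjection_rightTranslate {q : Δ → ℝ} (hq : Summable q) (σ : Δ) (x : ℓ²) :
    (fixedSpace q).starProjection (rightTranslate σ x)
      = rightTranslate σ ((fixedSpace q).starProjection x) := by
  have := (fixedSpace q).starProjection_map_apply (rightTranslate σ) (rightTranslate σ x)
  simpa [map_rightTranslate_fixedSpace hq] using this

variable [DecidableEq Δ]

local notation "e₁" => lp.single 2 (1 : Δ) (1 : ℝ)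

lemma single_eq_rightTranslate (γ : Δ) :
    lp.single 2 γ (1 : ℝ) = rightTranslate γ⁻¹ e₁ := by
  ext δ
  simp [Pi.single_apply, mul_inv_eq_one]

lemma coe_convOp_single {q : Δ → ℝ} (hq : Summable q) : ⇑(convOp q e₁) = q := by
  rw [coe_convOp hq, lp.coeFn_single, conv_single]

lemma starProjection_single_apply_inv {q : Δ → ℝ} (hq : Summable q) (γ : Δ) :
    (fixedSpace q).starProjection e₁ γ⁻¹ = (fixedSpace q).starProjection e₁ γ := by
  set P := (fixedSpace q).starProjection
  calc P e₁ γ⁻¹ = rightTranslate γ⁻¹ (P e₁) 1 := by simp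
    _ = P (lp.single 2 γ 1) 1 := by
      rw [single_eq_rightTranslate γ, starProjection_rightTranslate hq]
    _ = ⟪e₁, P (lp.single 2 γ 1)⟫ := (lp.inner_single_one_left _ _).symm
    _ = ⟪P e₁, lp.single 2 γ 1⟫ := (Submodule.inner_starProjection_left_eq_right _ _ _).symm
    _ = P e₁ γ := lp.inner_single_one_right _ _

lemma starProjection_single_eq_zero {q : Δ → ℝ} (hq : Summable q) (hqq : conv q q = q)
    (hq1 : q 1 = 0) : (fixedSpace q).starProjection e₁ = 0 := by
  set u := (fixedSpace q).starProjection e₁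
  have hu : u ∈ fixedSpace q := (fixedSpace q).starProjection_apply_mem e₁
  have hq_mem : convOp q e₁ ∈ fixedSpace q := mem_fixedSpace.2 (convOp_convOp hq hqq e₁)
  have hu1 : u 1 = 0 := calc
    u 1 = convOp q u 1 := by rw [mem_fixedSpace.1 hu]
    _ = ∑' δ, u δ⁻¹ * q δ := by simp [coe_convOp hq, conv, mul_comm]
    _ = ⟪u, convOp q e₁⟫ := by
      simp [lp.inner_eq_tsum, coe_convOp_single hq, starProjection_single_apply_inv hq, u,
        mul_comm]
    _ = ⟪e₁, convOp q e₁⟫ := Submodule.inner_starProjection_left_of_mem _ hq_mem _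
    _ = 0 := by rw [lp.inner_single_one_left, coe_convOp_single hq, hq1]
  rw [← inner_self_eq_zero (𝕜 := ℝ)]
  calc ⟪u, u⟫ = ⟪e₁, u⟫ := Submodule.inner_starProjection_left_of_mem _ hu _
    _ = 0 := by rw [lp.inner_single_one_left, hu1]

theorem eq_zero_of_conv_self_of_apply_one_eq_zero {q : Δ → ℝ} (hq : Summable q)
    (hqq : conv q q = q) (hq1 : q 1 = 0) : q = 0 := by
  have hq_mem : convOp q e₁ ∈ fixedSpace q := mem_fixedSpace.2 (convOp_convOp hq hqq e₁)
  funext γ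
  calc q γ = ⟪lp.single 2 γ 1, convOp q e₁⟫ := by
        rw [lp.inner_single_one_left, coe_convOp_single hq]
    _ = ⟪(fixedSpace q).starProjection (lp.single 2 γ 1), convOp q e₁⟫ :=
      (Submodule.inner_starProjection_left_of_mem _ hq_mem _).symm
    _ = 0 := by
      rw [single_eq_rightTranslate, starProjection_rightTranslate hq,
        starProjection_single_eq_zero hq hqq hq1, map_zero, inner_zero_left]

lemma conv_single_sub_self {p : Δ → ℝ} (hp : Summable p) (hpp : conv p p = p) :
    conv (Pi.single 1 1 - p) (Pi.single 1 1 - p) = Pi.single 1 1 - p := by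
  have hq : Summable (Pi.single 1 1 - p) := summable_single_one.sub hp
  rw [conv_sub_left summable_single_one hp (abs_le_tsum_abs hq),
    conv_sub_right hp (abs_le_tsum_abs summable_single_one) (abs_le_tsum_abs hp), single_conv,
    conv_single, hpp, sub_self, sub_zero]

theorem eq_single_of_conv_self_of_apply_one_eq_one {p : Δ → ℝ} (hp : Summable p)
    (hpp : conv p p = p) (hp1 : p 1 = 1) : p = Pi.single 1 1 := by
  refine (sub_eq_zero.1 ?_).symm
  exact eq_zero_of_conv_self_of_apply_one_eq_zero (summable_single_one.sub hp)
    (conv_single_sub_self hp hpp) (by simp [hp1])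

end L1Conv

theorem l1_directly_finite_general {Δ : Type*} [Group Δ] [DecidableEq Δ]
    (v w : Δ → ℝ)
    (hv : Summable fun δ => |v δ|) (hw : Summable fun δ => |w δ|)
    (h : ∀ γ : Δ, ∑' δ : Δ, v δ * w (δ⁻¹ * γ) = if γ = 1 then 1 else 0) :
    ∀ γ : Δ, ∑' δ : Δ, w δ * v (δ⁻¹ * γ) = if γ = 1 then 1 else 0 := by
  rw [summable_abs_iff] at hv hw
  have hvw : L1Conv.conv v w = Pi.single 1 1 :=
    funext fun γ ↦ (h γ).trans (Pi.single_apply 1 1 γ).symm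
  have hwv1 : L1Conv.conv w v 1 = 1 := by
    rw [L1Conv.conv_apply_one_comm, hvw, Pi.single_eq_same]
  have hwv := L1Conv.eq_single_of_conv_self_of_apply_one_eq_one (L1Conv.summable_conv hw hv)
    (L1Conv.conv_swap_idempotent hv hw hvw) hwv1
  exact fun γ ↦ (congrFun hwv γ).trans (Pi.single_apply 1 1 γ)

/-- Kaplansky. The convolution algebra `ℓ¹(Δ,ℝ)` of a countable discrete
group `Δ` is directly finite: if `v·w = δ_e` for absolutely summable `v, w : Δ → ℝ`, then
`w·v = δ_e`. -/
theorem l1_directly_finite {Δ : Type*} [Group Δ] [Countable Δ] [DecidableEq Δ]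
    (v w : Δ → ℝ)
    (hv : Summable fun δ => |v δ|) (hw : Summable fun δ => |w δ|)
    (h : ∀ γ : Δ, ∑' δ : Δ, v δ * w (δ⁻¹ * γ) = if γ = 1 then 1 else 0) :
    ∀ γ : Δ, ∑' δ : Δ, w δ * v (δ⁻¹ * γ) = if γ = 1 then 1 else 0 :=
  l1_directly_finite_general v w hv hw h
end

section
/- Let Δ be a countable discrete group and let f ∈ ℤΔ be invertible in ℓ¹(Δ,ℝ) (equivalently, the principal algebraic Δ-action α_f is expansive). Then there exists g ∈ ℤΔ such that the product fg ∈ ℤΔ is lopsided, i.e., there is δ₀ ∈ Δ with |(fg)(δ₀)| > Σ_{δ≠δ₀} |(fg)(δ)|. -/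
open MeasureTheory Filter



/-- The additive circle `ℝ/ℤ`. -/
abbrev T1 : Type := AddCircle (1 : ℝ)

variable {Δ : Type*} [Group Δ]

/-- For `f` in the integral group ring `ℤΔ`, the closed shift-invariant subgroup
`X_f = { t ∈ (ℝ/ℤ)^Δ : ∑_δ f(δ) • t(θδ) = 0 for all θ }`. -/
noncomputable def Xf (f : MonoidAlgebra ℤ Δ) : AddSubgroup (Δ → T1) where
  carrier := {t | ∀ θ : Δ, ∑ δ ∈ f.coeff.support, f.coeff δ • t (θ * δ) = 0}
  zero_mem' := by intro θ; simp
  add_mem' := by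
    intro a b ha hb θ
    simp only [Pi.add_apply, smul_add, Finset.sum_add_distrib]
    rw [ha θ, hb θ, add_zero]
  neg_mem' := by
    intro a ha θ
    simp only [Pi.neg_apply, smul_neg]
    rw [Finset.sum_neg_distrib, ha θ, neg_zero]

/-- The left shift action: `(γ · t)(δ) = t(γ⁻¹ δ)`. -/
def shift (γ : Δ) (t : Δ → T1) : Δ → T1 := fun δ => t (γ⁻¹ * δ)

theorem shift_mem {f : MonoidAlgebra ℤ Δ} (γ : Δ) {t : Δ → T1} (ht : t ∈ Xf f) :
    shift γ t ∈ Xf f := by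
  intro θ
  simpa [shift, mul_assoc] using ht (γ⁻¹ * θ)

/-- The principal algebraic `Δ`-action `α_f` on `X_f`. -/
def shiftX (f : MonoidAlgebra ℤ Δ) (γ : Δ) : ↥(Xf f) → ↥(Xf f) :=
  fun t => ⟨shift γ t.1, shift_mem γ t.2⟩

variable [DecidableEq Δ]

/-- `w : Δ → ℝ` is a two-sided `ℓ¹`-inverse of `f ∈ ℤΔ`. -/
def IsL1Inverse (f : MonoidAlgebra ℤ Δ) (w : Δ → ℝ) : Prop :=
  Summable (fun δ => |w δ|) ∧
  (∀ γ : Δ, ∑ δ ∈ f.coeff.support, (f.coeff δ : ℝ) * w (δ⁻¹ * γ) = if γ = 1 then 1 else 0) ∧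
  (∀ γ : Δ, ∑ δ ∈ f.coeff.support, w (γ * δ⁻¹) * (f.coeff δ : ℝ) = if γ = 1 then 1 else 0)

/-- `f ∈ ℤΔ` is invertible in `ℓ¹(Δ,ℝ)`. -/
def L1Invertible (f : MonoidAlgebra ℤ Δ) : Prop :=
  ∃ w : Δ → ℝ, IsL1Inverse f w

/-- The principal algebraic `Δ`-action `α_f` is expansive: there is a neighborhood `U`
of `0` in `X_f` with `⋂_γ γ·U = {0}`. -/
def ExpansiveAction (f : MonoidAlgebra ℤ Δ) : Prop :=
  ∃ U : Set ↥(Xf f), U ∈ nhds 0 ∧ (⋂ γ : Δ, shiftX f γ '' U) = {0}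

/-- `f* ∈ ℤΔ`, given by `f*(δ) = f(δ⁻¹)`. -/
def fstar (f : MonoidAlgebra ℤ Δ) : MonoidAlgebra ℤ Δ :=
  MonoidAlgebra.ofCoeff (Finsupp.equivMapDomain (Equiv.inv Δ) f.coeff)

/-- The action `α_f` is mixing with respect to `μ`. -/
def MixingAction (f : MonoidAlgebra ℤ Δ) (μ : Measure ↥(Xf f)) : Prop :=
  ∀ E F : Set ↥(Xf f), MeasurableSet E → MeasurableSet F →
    Tendsto (fun γ : Δ => μ ((shiftX f γ '' E) ∩ F)) cofinite (nhds (μ E * μ F))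

/-!
Let `w ∈ ℓ¹(Δ)` satisfy `f ⋆ w = δ₁`. Truncate `w` to a finite set `F` carrying all but `ε` of its
`ℓ¹`-mass, scale by a large integer `N` and round: this gives `g ∈ ℤΔ` with
`‖g - N w‖₁ ≤ |F|/2 + N ε`. Then `fg - N δ₁ = f ⋆ (g - N w)` has `ℓ¹`-norm at most
`‖f‖₁ (|F|/2 + N ε)`, which is less than `N` once `ε ‖f‖₁ ≤ 1/4` and `N > ‖f‖₁ |F|`; so `fg`
is lopsided at `1`.
-/

section Lopsided

variable {G : Type*}

theorem sum_abs_erase_lt_of_sum_abs_sub_lt [DecidableEq G] (s : Finset G) (u : G → ℝ) (δ₀ : G)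
    {N : ℝ} (h : ∑ γ ∈ insert δ₀ s, |u γ - if γ = δ₀ then N else 0| < N) :
    ∑ γ ∈ s.erase δ₀, |u γ| < |u δ₀| := by
  rw [← Finset.add_sum_erase _ _ (Finset.mem_insert_self δ₀ s), Finset.erase_insert_eq_erase,
    if_pos rfl] at h
  rw [Finset.sum_congr rfl fun γ hγ => by rw [if_neg (Finset.ne_of_mem_erase hγ), sub_zero]] at h
  linarith [abs_sub_abs_le_abs_sub N (u δ₀), le_abs_self N, abs_sub_comm N (u δ₀)]

noncomputable def roundedTruncation (F : Finset G) (N : ℝ) (w : G → ℝ) : MonoidAlgebra ℤ G :=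
  ∑ a ∈ F, MonoidAlgebra.single a (round (N * w a))

theorem coeff_roundedTruncation [DecidableEq G] (F : Finset G) (N : ℝ) (w : G → ℝ) (a : G) :
    (roundedTruncation F N w).coeff a = if a ∈ F then round (N * w a) else 0 := by
  simp [roundedTruncation, Finsupp.single_apply]

theorem sum_abs_roundedTruncation_sub_le [DecidableEq G] {F : Finset G} {w : G → ℝ} {ε N : ℝ}
    (hN : 0 ≤ N) (htail : ∀ t : Finset G, Disjoint t F → ∑ a ∈ t, |w a| < ε) (s : Finset G) :
    ∑ a ∈ s, |((roundedTruncation F N w).coeff a : ℝ) - N * w a| ≤ F.card / 2 + N * ε := by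
  rw [← Finset.sum_filter_add_sum_filter_not s (fun a => a ∈ F)]
  gcongr
  · calc _ ≤ ∑ _a ∈ s.filter (fun a => a ∈ F), (1 / 2 : ℝ) := Finset.sum_le_sum fun a ha => by
            rw [coeff_roundedTruncation, if_pos (Finset.mem_filter.mp ha).2, abs_sub_comm]
            exact abs_sub_round _
      _ ≤ F.card / 2 := by
            rw [Finset.sum_const, nsmul_eq_mul, mul_one_div]
            gcongr
            exact fun a ha => (Finset.mem_filter.mp ha).2
  · calc _ = N * ∑ a ∈ s.filter (fun a => a ∉ F), |w a| := by
            rw [Finset.mul_sum]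
            refine Finset.sum_congr rfl fun a ha => ?_
            rw [coeff_roundedTruncation, if_neg (Finset.mem_filter.mp ha).2, Int.cast_zero,
              zero_sub, abs_neg, abs_mul, abs_of_nonneg hN]
      _ ≤ N * ε := by
            gcongr
            exact (htail _ (Finset.disjoint_left.mpr fun a ha => (Finset.mem_filter.mp ha).2)).le

variable [Group G]

theorem MonoidAlgebra.coeff_mul_eq_sum_support (f g : MonoidAlgebra ℤ G) (γ : G) :
    ((f * g).coeff γ : ℝ) = ∑ δ ∈ f.coeff.support, (f.coeff δ : ℝ) * g.coeff (δ⁻¹ * γ) := by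
  rw [MonoidAlgebra.coeff_mul_apply_left, Finsupp.sum]
  push_cast
  rfl

/-- The finite form of Young's inequality `‖f ⋆ v‖₁ ≤ ‖f‖₁ ‖v‖₁`. -/
theorem sum_abs_convolution_le (s : Finset G) (f v : G → ℝ) {B : ℝ}
    (hv : ∀ t : Finset G, ∑ a ∈ t, |v a| ≤ B) (T : Finset G) :
    ∑ γ ∈ T, |∑ δ ∈ s, f δ * v (δ⁻¹ * γ)| ≤ (∑ δ ∈ s, |f δ|) * B := by
  have htranslate (δ : G) : ∑ γ ∈ T, |v (δ⁻¹ * γ)| ≤ B := by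
    simpa using hv (T.map (mulLeftEmbedding δ⁻¹))
  calc ∑ γ ∈ T, |∑ δ ∈ s, f δ * v (δ⁻¹ * γ)|
      ≤ ∑ γ ∈ T, ∑ δ ∈ s, |f δ| * |v (δ⁻¹ * γ)| :=
        Finset.sum_le_sum fun γ _ => (Finset.abs_sum_le_sum_abs _ _).trans_eq (by simp [abs_mul])
    _ = ∑ δ ∈ s, |f δ| * ∑ γ ∈ T, |v (δ⁻¹ * γ)| := by
        rw [Finset.sum_comm]; simp only [Finset.mul_sum]
    _ ≤ ∑ δ ∈ s, |f δ| * B :=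
        Finset.sum_le_sum fun δ _ => mul_le_mul_of_nonneg_left (htranslate δ) (abs_nonneg _)
    _ = (∑ δ ∈ s, |f δ|) * B := (Finset.sum_mul ..).symm

end Lopsided

theorem exists_lopsided_multiple_general {Δ : Type*} [Group Δ] [DecidableEq Δ]
    (f : MonoidAlgebra ℤ Δ) (hf : L1Invertible f) :
    ∃ g : MonoidAlgebra ℤ Δ, ∃ δ₀ : Δ,
      ∑ δ ∈ (f * g).coeff.support.erase δ₀, |(f * g).coeff δ| < |(f * g).coeff δ₀| := by
  obtain ⟨w, hw, hfw, -⟩ := hf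
  set nf : ℝ := ∑ δ ∈ f.coeff.support, |(f.coeff δ : ℝ)|
  have hnf : 0 ≤ nf := Finset.sum_nonneg fun _ _ => abs_nonneg _
  set ε : ℝ := 1 / (4 * (nf + 1))
  obtain ⟨F, hF⟩ := summable_iff_vanishing.mp hw (Set.Iio ε) (Iio_mem_nhds (by positivity))
  set N : ℝ := ⌈nf * F.card⌉₊ + 1
  have hN : nf * F.card < N := (Nat.le_ceil _).trans_lt (lt_add_one _)
  have hnfε : nf * ε ≤ 1 / 4 := by
    rw [mul_one_div, div_le_div_iff₀ (by positivity) (by norm_num)]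
    linarith
  set g := roundedTruncation F N w
  have hdefect (γ : Δ) : ((f * g).coeff γ : ℝ) - (if γ = 1 then N else 0)
      = ∑ δ ∈ f.coeff.support, (f.coeff δ : ℝ) * ((g.coeff (δ⁻¹ * γ) : ℝ) - N * w (δ⁻¹ * γ)) := by
    have hNfw : (if γ = 1 then N else 0)
        = N * ∑ δ ∈ f.coeff.support, (f.coeff δ : ℝ) * w (δ⁻¹ * γ) := by
      rw [hfw γ, mul_ite, mul_one, mul_zero]
    rw [MonoidAlgebra.coeff_mul_eq_sum_support, hNfw]
    simp only [mul_sub, Finset.sum_sub_distrib, Finset.mul_sum, mul_left_comm N]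
  have herror := sum_abs_convolution_le f.coeff.support (fun δ => (f.coeff δ : ℝ))
    (fun a => (g.coeff a : ℝ) - N * w a)
    (sum_abs_roundedTruncation_sub_le (by positivity) hF) (insert 1 (f * g).coeff.support)
  simp only [← hdefect] at herror
  have hsmall : nf * (F.card / 2 + N * ε) < N := by
    nlinarith [mul_le_mul_of_nonneg_left hnfε (by positivity : (0 : ℝ) ≤ N)]
  exact ⟨g, 1, by exact_mod_cast sum_abs_erase_lt_of_sum_abs_sub_lt _ _ 1 (herror.trans_lt hsmall)⟩

/-- Purbhoo; H. Li. If `f ∈ ℤΔ` is invertible in `ℓ¹(Δ,ℝ)` (equivalently,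
`α_f` is expansive), then there is a `g ∈ ℤΔ` such that `fg` is lopsided. -/
theorem exists_lopsided_multiple {Δ : Type*} [Group Δ] [Countable Δ] [DecidableEq Δ]
    (f : MonoidAlgebra ℤ Δ) (hf : L1Invertible f) :
    ∃ g : MonoidAlgebra ℤ Δ, ∃ δ₀ : Δ,
      ∑ δ ∈ (f * g).coeff.support.erase δ₀, |(f * g).coeff δ| < |(f * g).coeff δ₀| :=
  exists_lopsided_multiple_general f hf
end

section
/- Let Δ be a finitely generated group with a finite symmetric generating set S (so S = S⁻¹ and S generates Δ), and for δ ∈ Δ let |δ|_S denote the word length of δ: the least n ≥ 0 such that δ is a product of n elements of S. Suppose f ∈ ℤΔ is invertible in ℓ¹(Δ,ℝ), with ℓ¹-inverse f⁻¹ : Δ → ℝ. Then there are constants C > 0 and 0 < r < 1 such that |f⁻¹(δ)| ≤ C·r^{|δ|_S} for all δ ∈ Δ. -/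
open MeasureTheory Filter



variable {Δ : Type*} [Group Δ]

variable [DecidableEq Δ]

/-! Truncate `w` to a finitely supported `u` with `‖w - u‖₁` small and put `g = 1 - u f ∈ ℝΔ`.
Since `w f = 1` we have `g = (w - u) f`, so `‖g‖₁ ≤ 1/2`; since `f w = 1` we have `g w = w - u`.
Hence outside the support of `u`, `w(γ) = ∑ g(y) w(y⁻¹γ)` with `y` ranging over the finite set
`supp g`, whose word lengths are at most some `M`. Iterating this `n` times is possible as long as
`|γ| ≥ n M` and gives `|w(γ)| ≤ ‖w‖₁ 2⁻ⁿ`. -/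

section WordLength

variable {G : Type*} [Group G] {S : Finset G}

noncomputable def wordLength (S : Finset G) (g : G) : ℕ :=
  sInf {n : ℕ | ∃ L : List G, L.length = n ∧ (∀ s ∈ L, s ∈ S) ∧ L.prod = g}

lemma exists_list_prod_eq (hsymm : ∀ s ∈ S, s⁻¹ ∈ S) (hgen : Subgroup.closure (S : Set G) = ⊤)
    (g : G) : ∃ L : List G, (∀ s ∈ L, s ∈ S) ∧ L.prod = g := by
  have hS : (S : Set G) ∪ (S : Set G)⁻¹ = S :=
    Set.union_eq_left.mpr fun s hs => by simpa using hsymm _ hs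
  apply Submonoid.exists_list_of_mem_closure
  rw [← hS, ← Subgroup.closure_toSubmonoid, hgen]
  trivial

lemma wordLength_mul_le (hsymm : ∀ s ∈ S, s⁻¹ ∈ S) (hgen : Subgroup.closure (S : Set G) = ⊤)
    (a b : G) : wordLength S (a * b) ≤ wordLength S a + wordLength S b := by
  have hne (g : G) :
      {n : ℕ | ∃ L : List G, L.length = n ∧ (∀ s ∈ L, s ∈ S) ∧ L.prod = g}.Nonempty :=
    let ⟨L, hL⟩ := exists_list_prod_eq hsymm hgen g; ⟨L.length, L, rfl, hL⟩
  obtain ⟨La, hLa_len, hLa, hLa_prod⟩ := Nat.sInf_mem (hne a)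
  obtain ⟨Lb, hLb_len, hLb, hLb_prod⟩ := Nat.sInf_mem (hne b)
  refine Nat.sInf_le ⟨La ++ Lb, by simp [wordLength, hLa_len, hLb_len], ?_, ?_⟩
  · simpa [or_imp, forall_and] using ⟨hLa, hLb⟩
  · rw [List.prod_append, hLa_prod, hLb_prod]

end WordLength

noncomputable def l1Norm {α : Type*} (p : α →₀ ℝ) : ℝ := p.sum fun _ r => |r|

lemma l1Norm_nonneg {α : Type*} (p : α →₀ ℝ) : 0 ≤ l1Norm p :=
  Finset.sum_nonneg fun _ _ => abs_nonneg _

lemma exists_finsupp_tsum_abs_sub_lt {α : Type*} {w : α → ℝ} (hw : Summable fun a => |w a|)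
    {ε : ℝ} (hε : 0 < ε) :
    ∃ u : α →₀ ℝ, Summable (fun a => |w a - u a|) ∧ ∑' a, |w a - u a| < ε := by
  classical
  obtain ⟨F, hF⟩ :=
    ((tendsto_order.1 (tendsto_tsum_compl_atTop_zero fun a => |w a|)).2 ε hε).exists
  have htail : (fun a => |w a - Finsupp.indicator F (fun a _ => w a) a|) =
      ((F : Set α)ᶜ).indicator fun a => |w a| := by
    ext a
    by_cases ha : a ∈ F <;> simp [Finsupp.indicator_apply, ha]
  refine ⟨Finsupp.indicator F fun a _ => w a, ?_, ?_⟩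
  · rw [htail]
    exact hw.indicator _
  · rwa [htail, ← _root_.tsum_subtype]

section GroupRing

variable {G : Type*} [Group G]

/-- `leftRegular.asAlgebraHom p φ` is the convolution `p * φ`; as an algebra map it is associative
for free. -/
def leftRegular : Representation ℝ G (G → ℝ) where
  toFun g := LinearMap.funLeft ℝ ℝ (g⁻¹ * ·)
  map_one' := by ext; simp
  map_mul' _ _ := by ext; simp [mul_assoc]

lemma leftRegular_asAlgebraHom_apply (p : MonoidAlgebra ℝ G) (φ : G → ℝ) (γ : G) :
    leftRegular.asAlgebraHom p φ γ = p.coeff.sum fun a r => r * φ (a⁻¹ * γ) := by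
  simp [Representation.asAlgebraHom_def, MonoidAlgebra.lift_apply, Finsupp.sum, leftRegular]

lemma leftRegular_asAlgebraHom_apply_single_one [DecidableEq G] (p : MonoidAlgebra ℝ G) :
    leftRegular.asAlgebraHom p (Pi.single 1 1) = p.coeff := by
  ext γ
  rw [leftRegular_asAlgebraHom_apply, Finsupp.sum_eq_single γ]
  · simp
  · intro a _ ha
    simp [inv_mul_eq_one, ha]
  · simp

lemma leftRegular_asAlgebraHom_one_sub_mul [DecidableEq G] {f : MonoidAlgebra ℝ G} {w : G → ℝ}
    (hleft : leftRegular.asAlgebraHom f w = Pi.single 1 1) (u : MonoidAlgebra ℝ G) :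
    leftRegular.asAlgebraHom (1 - u * f) w = w - u.coeff := by
  rw [map_sub, map_mul, map_one, LinearMap.sub_apply, Module.End.mul_apply, hleft,
    leftRegular_asAlgebraHom_apply_single_one, Module.End.one_apply]

lemma sum_le_tsum_comp_mul_right {h : G → ℝ} (h0 : ∀ g, 0 ≤ h g) (hh : Summable h)
    (s : Finset G) (a : G) : ∑ y ∈ s, h (y * a) ≤ ∑' g, h g := by
  rw [← (Equiv.mulRight a).tsum_eq]
  exact ((Equiv.mulRight a).summable_iff.mpr hh).sum_le_tsum s fun _ _ => h0 _

lemma l1Norm_one_sub_mul_le [DecidableEq G] {f u : MonoidAlgebra ℝ G} {w : G → ℝ}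
    (hright : ∀ γ, (f.coeff.sum fun a r => w (γ * a⁻¹) * r) = if γ = 1 then 1 else 0)
    (hsum : Summable fun γ => |w γ - u.coeff γ|) :
    l1Norm (1 - u * f).coeff ≤ l1Norm f.coeff * ∑' γ, |w γ - u.coeff γ| := by
  have hcoeff (y : G) :
      (1 - u * f).coeff y = f.coeff.sum fun a r => (w (y * a⁻¹) - u.coeff (y * a⁻¹)) * r := by
    have hone : (1 : MonoidAlgebra ℝ G).coeff y = if y = 1 then 1 else 0 := by
      simp [MonoidAlgebra.one_def, Finsupp.single_apply, eq_comm]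
    simp only [MonoidAlgebra.coeff_sub, Finsupp.sub_apply, MonoidAlgebra.coeff_mul_apply_right,
      hone, ← hright, sub_mul, Finsupp.sum_sub]
  calc l1Norm (1 - u * f).coeff
      ≤ ∑ y ∈ (1 - u * f).coeff.support, ∑ a ∈ f.coeff.support,
          |w (y * a⁻¹) - u.coeff (y * a⁻¹)| * |f.coeff a| := by
        refine Finset.sum_le_sum fun y _ => ?_
        rw [hcoeff]
        exact (Finset.abs_sum_le_sum_abs _ _).trans_eq (by simp only [abs_mul])
    _ = ∑ a ∈ f.coeff.support, |f.coeff a| *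
          ∑ y ∈ (1 - u * f).coeff.support, |w (y * a⁻¹) - u.coeff (y * a⁻¹)| := by
        rw [Finset.sum_comm]
        simp only [Finset.mul_sum, mul_comm]
    _ ≤ ∑ a ∈ f.coeff.support, |f.coeff a| * ∑' γ, |w γ - u.coeff γ| := by
        gcongr with a
        exact sum_le_tsum_comp_mul_right (fun _ => abs_nonneg _) hsum _ _
    _ = l1Norm f.coeff * ∑' γ, |w γ - u.coeff γ| := by
        rw [l1Norm, Finsupp.sum, Finset.sum_mul]

end GroupRing

section Decay

variable {G : Type*} [Group G] {ℓ : G → ℕ} {w : G → ℝ} {W θ : ℝ} {g : G →₀ ℝ} {M : ℕ}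

lemma abs_le_mul_pow_of_eq_sum (hℓ : ∀ a b, ℓ (a * b) ≤ ℓ a + ℓ b) (hW : ∀ γ, |w γ| ≤ W)
    (hg : l1Norm g ≤ θ) (hgM : ∀ y ∈ g.support, ℓ y ≤ M)
    (hrec : ∀ γ, M ≤ ℓ γ → w γ = g.sum fun y r => r * w (y⁻¹ * γ)) :
    ∀ (n : ℕ) (γ : G), n * M ≤ ℓ γ → |w γ| ≤ W * θ ^ n := by
  have hW0 : 0 ≤ W := (abs_nonneg _).trans (hW 1)
  have hθ0 : 0 ≤ θ := (l1Norm_nonneg g).trans hg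
  intro n
  induction n with
  | zero => simpa using hW
  | succ n ih =>
    intro γ hγ
    rw [Nat.succ_mul] at hγ
    have hnear (y : G) (hy : y ∈ g.support) : |w (y⁻¹ * γ)| ≤ W * θ ^ n := by
      refine ih _ ?_
      have hsplit := hℓ y (y⁻¹ * γ)
      rw [mul_inv_cancel_left] at hsplit
      have hyM := hgM y hy
      omega
    calc |w γ| = |∑ y ∈ g.support, g y * w (y⁻¹ * γ)| := by rw [hrec γ (by omega)]; rfl
      _ ≤ ∑ y ∈ g.support, |g y| * (W * θ ^ n) := by
        refine (Finset.abs_sum_le_sum_abs _ _).trans (Finset.sum_le_sum fun y hy => ?_)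
        rw [abs_mul]
        exact mul_le_mul_of_nonneg_left (hnear y hy) (abs_nonneg _)
      _ = l1Norm g * (W * θ ^ n) := by rw [← Finset.sum_mul]; rfl
      _ ≤ W * θ ^ (n + 1) := by
        rw [pow_succ]
        nlinarith [mul_nonneg hW0 (pow_nonneg hθ0 n)]

lemma pow_div_le_inv_mul_rpow_pow (hθ0 : 0 < θ) (hθ1 : θ ≤ 1) (m : ℕ) :
    θ ^ (m / M) ≤ θ⁻¹ * (θ ^ (M⁻¹ : ℝ)) ^ m := by
  have hfloor : ((m : ℝ) / M) - 1 ≤ (m / M : ℕ) := by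
    rw [← Nat.floor_div_eq_div (K := ℝ)]
    linarith [Nat.lt_floor_add_one ((m : ℝ) / M)]
  rw [← Real.rpow_natCast _ m, ← Real.rpow_mul hθ0.le, ← Real.rpow_neg_one,
    ← Real.rpow_add hθ0, ← Real.rpow_natCast θ]
  refine Real.rpow_le_rpow_of_exponent_ge hθ0 hθ1 ?_
  rw [inv_mul_eq_div]
  linarith

theorem exists_abs_le_mul_pow_of_eq_sum (hℓ : ∀ a b, ℓ (a * b) ≤ ℓ a + ℓ b)
    (hW : ∀ γ, |w γ| ≤ W) (hθ0 : 0 < θ) (hθ1 : θ < 1) (hg : l1Norm g ≤ θ)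
    (hgM : ∀ y ∈ g.support, ℓ y ≤ M)
    (hrec : ∀ γ, M ≤ ℓ γ → w γ = g.sum fun y r => r * w (y⁻¹ * γ)) :
    ∃ C : ℝ, 0 < C ∧ ∃ r : ℝ, 0 < r ∧ r < 1 ∧ ∀ γ : G, |w γ| ≤ C * r ^ ℓ γ := by
  have hW0 : 0 ≤ W := (abs_nonneg _).trans (hW 1)
  refine ⟨(W + 1) * θ⁻¹, by positivity, θ ^ ((M + 1 : ℕ)⁻¹ : ℝ), by positivity,
    Real.rpow_lt_one hθ0.le hθ1 (by positivity), fun γ => ?_⟩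
  calc |w γ| ≤ W * θ ^ (ℓ γ / (M + 1)) :=
        abs_le_mul_pow_of_eq_sum hℓ hW hg (fun y hy => (hgM y hy).trans M.le_succ)
          (fun γ hγ => hrec γ (by omega)) _ γ (Nat.div_mul_le_self _ _)
    _ ≤ W * (θ⁻¹ * (θ ^ ((M + 1 : ℕ)⁻¹ : ℝ)) ^ ℓ γ) :=
      mul_le_mul_of_nonneg_left (pow_div_le_inv_mul_rpow_pow hθ0 hθ1.le _) hW0
    _ ≤ (W + 1) * θ⁻¹ * (θ ^ ((M + 1 : ℕ)⁻¹ : ℝ)) ^ ℓ γ := by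
      rw [← mul_assoc]
      gcongr
      linarith

end Decay

theorem exists_abs_le_mul_pow_of_isInverse {G : Type*} [Group G] [DecidableEq G] {ℓ : G → ℕ}
    (hℓ : ∀ a b, ℓ (a * b) ≤ ℓ a + ℓ b) {f : MonoidAlgebra ℝ G} {w : G → ℝ}
    (hsum : Summable fun γ => |w γ|)
    (hleft : ∀ γ, (f.coeff.sum fun a r => r * w (a⁻¹ * γ)) = if γ = 1 then 1 else 0)
    (hright : ∀ γ, (f.coeff.sum fun a r => w (γ * a⁻¹) * r) = if γ = 1 then 1 else 0) :
    ∃ C : ℝ, 0 < C ∧ ∃ r : ℝ, 0 < r ∧ r < 1 ∧ ∀ γ : G, |w γ| ≤ C * r ^ ℓ γ := by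
  have hf0 := l1Norm_nonneg f.coeff
  obtain ⟨u, hu, hu_small⟩ :=
    exists_finsupp_tsum_abs_sub_lt hsum (ε := (2 * (l1Norm f.coeff + 1))⁻¹) (by positivity)
  set g := 1 - MonoidAlgebra.ofCoeff u * f
  have hg : l1Norm g.coeff ≤ 2⁻¹ := by
    refine (l1Norm_one_sub_mul_le hright hu).trans ?_
    calc l1Norm f.coeff * ∑' γ, |w γ - u γ| ≤ l1Norm f.coeff * (2 * (l1Norm f.coeff + 1))⁻¹ :=
          mul_le_mul_of_nonneg_left hu_small.le hf0
      _ ≤ 2⁻¹ := by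
          rw [← div_eq_mul_inv, div_le_iff₀ (by positivity)]
          linarith
  have hfw : leftRegular.asAlgebraHom f w = Pi.single 1 1 := by
    ext γ
    rw [leftRegular_asAlgebraHom_apply, hleft, Pi.single_apply]
  have hrec (γ : G) (hγ : u.support.sup ℓ + 1 ≤ ℓ γ) :
      w γ = g.coeff.sum fun y r => r * w (y⁻¹ * γ) := by
    have hγu : u γ = 0 :=
      Finsupp.notMem_support_iff.mp fun h => by linarith [Finset.le_sup (f := ℓ) h]
    have hgw := congrFun (leftRegular_asAlgebraHom_one_sub_mul hfw (.ofCoeff u)) γ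
    rw [leftRegular_asAlgebraHom_apply, Pi.sub_apply, hγu, sub_zero] at hgw
    exact hgw.symm
  exact exists_abs_le_mul_pow_of_eq_sum hℓ (fun γ => hsum.le_tsum γ fun _ _ => abs_nonneg _)
    (by norm_num) (by norm_num) hg (M := max (u.support.sup ℓ + 1) (g.coeff.support.sup ℓ))
    (fun y hy => le_max_of_le_right (Finset.le_sup hy))
    (fun γ hγ => hrec γ (le_of_max_le_left hγ))

theorem l1_inverse_exponential_decay_general {Δ : Type*} [Group Δ] [DecidableEq Δ]
    (S : Finset Δ) (hsymm : ∀ s ∈ S, s⁻¹ ∈ S) (hgen : Subgroup.closure (S : Set Δ) = ⊤)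
    (f : MonoidAlgebra ℤ Δ) (w : Δ → ℝ) (hw : IsL1Inverse f w) :
    ∃ C : ℝ, 0 < C ∧ ∃ r : ℝ, 0 < r ∧ r < 1 ∧ ∀ δ : Δ,
      |w δ| ≤ C * r ^ sInf {n : ℕ |
        ∃ L : List Δ, L.length = n ∧ (∀ s ∈ L, s ∈ S) ∧ L.prod = δ} := by
  obtain ⟨hsum, hleft, hright⟩ := hw
  refine exists_abs_le_mul_pow_of_isInverse (wordLength_mul_le hsymm hgen)
    (f := MonoidAlgebra.map (Int.castAddHom ℝ) f) hsum (fun γ => ?_) (fun γ => ?_)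
  all_goals
    rw [MonoidAlgebra.coeff_map, Finsupp.sum_mapRange_index fun _ => by simp]
  exacts [hleft γ, hright γ]

/-- If `f ∈ ℤΔ` is invertible in `ℓ¹(Δ,ℝ)` for a finitely generated group
`Δ` with finite symmetric generating set `S`, then the coefficients of `f⁻¹` decay
exponentially fast in the word length `|δ|_S`. -/
theorem l1_inverse_exponential_decay {Δ : Type*} [Group Δ] [Countable Δ] [DecidableEq Δ]
    (S : Finset Δ) (hsymm : ∀ s ∈ S, s⁻¹ ∈ S) (hgen : Subgroup.closure (S : Set Δ) = ⊤)
    (f : MonoidAlgebra ℤ Δ) (w : Δ → ℝ) (hw : IsL1Inverse f w) :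
    ∃ C : ℝ, 0 < C ∧ ∃ r : ℝ, 0 < r ∧ r < 1 ∧ ∀ δ : Δ,
      |w δ| ≤ C * r ^ sInf {n : ℕ |
        ∃ L : List Δ, L.length = n ∧ (∀ s ∈ L, s ∈ S) ∧ L.prod = δ} :=
  l1_inverse_exponential_decay_general S hsymm hgen f w hw
end

section
/- Suppose ζ ∈ ℂ with |ζ| = 1 is not a root of unity, and there are constants C > 0 and 0 < r < 1 such that |ζ^n − 1| ≥ C·r^n for all n ≥ 1. If κ ∈ ℂ with |κ| < r, then the function ξ ↦ log|1 − ξκ| on S¹ is a continuous coboundary for rotation by ζ: there exists a continuous function b : S¹ → ℝ such that log|1 − ξκ| = b(ξζ) − b(ξ) for all ξ ∈ S¹. -/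
/-!
Expanding `log (1 - ξκ) = -∑_{n ≥ 1} (ξκ)ⁿ / n` and solving the cohomological equation
`h(ξζ) - h(ξ) = ∑ cₙ ξⁿ` coefficientwise gives `h(ξ) = ∑ cₙ / (ζⁿ - 1) ξⁿ`. The Diophantine
condition bounds the small divisors by `|ζⁿ - 1|⁻¹ ≤ C⁻¹ r⁻ⁿ`, so for `|κ| < r` the coefficients of
`h` are dominated by the geometric sequence `C⁻¹ (|κ| / r)ⁿ`. Hence `h` converges uniformly on the
closed unit disc, and `b = -Re h` is the continuous transfer function.
-/

open Metric

noncomputable section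

def coboundarySeries (ζ : ℂ) (c : ℕ → ℂ) (ξ : ℂ) : ℂ :=
  ∑' n, c n / (ζ ^ n - 1) * ξ ^ n

section PowerSeries

variable {a : ℕ → ℂ}

theorem norm_mul_pow_le {ξ : ℂ} (hξ : ‖ξ‖ ≤ 1) (n : ℕ) : ‖a n * ξ ^ n‖ ≤ ‖a n‖ := by
  rw [norm_mul, norm_pow]
  exact mul_le_of_le_one_right (norm_nonneg _) (pow_le_one₀ (norm_nonneg _) hξ)

theorem summable_mul_pow (ha : Summable fun n => ‖a n‖) {ξ : ℂ} (hξ : ‖ξ‖ ≤ 1) :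
    Summable fun n => a n * ξ ^ n :=
  ha.of_norm_bounded (norm_mul_pow_le hξ)

theorem continuousOn_tsum_mul_pow (ha : Summable fun n => ‖a n‖) :
    ContinuousOn (fun ξ => ∑' n, a n * ξ ^ n) (closedBall 0 1) :=
  continuousOn_tsum (fun n => (continuous_const.mul (continuous_pow n)).continuousOn) ha
    fun n _ hξ => norm_mul_pow_le (mem_closedBall_zero_iff.1 hξ) n

end PowerSeries

section Coboundary

variable {ζ : ℂ} {c : ℕ → ℂ}

theorem continuousOn_coboundarySeries (hc : Summable fun n => ‖c n / (ζ ^ n - 1)‖) :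
    ContinuousOn (coboundarySeries ζ c) (closedBall 0 1) :=
  continuousOn_tsum_mul_pow hc

theorem coboundarySeries_mul_sub (hζ : ‖ζ‖ = 1) (hc : Summable fun n => ‖c n / (ζ ^ n - 1)‖)
    (hc_res : ∀ n, ζ ^ n = 1 → c n = 0) {ξ : ℂ} (hξ : ‖ξ‖ ≤ 1) :
    coboundarySeries ζ c (ξ * ζ) - coboundarySeries ζ c ξ = ∑' n, c n * ξ ^ n := by
  have hξζ : ‖ξ * ζ‖ ≤ 1 := by rwa [norm_mul, hζ, mul_one]
  rw [coboundarySeries, coboundarySeries,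
    ← (summable_mul_pow hc hξζ).tsum_sub (summable_mul_pow hc hξ)]
  refine tsum_congr fun n => ?_
  by_cases hres : ζ ^ n = 1
  · simp [hres, hc_res n hres]
  · have : ζ ^ n - 1 ≠ 0 := sub_ne_zero.2 hres
    field_simp
    ring

end Coboundary

section Diophantine

variable {ζ κ : ℂ} {C r : ℝ}

theorem norm_pow_div_natCast_div_pow_sub_one_le (hC : 0 < C) (hr : 0 < r)
    (hdio : ∀ n : ℕ, 1 ≤ n → C * r ^ n ≤ ‖ζ ^ n - 1‖) (n : ℕ) :
    ‖κ ^ n / n / (ζ ^ n - 1)‖ ≤ C⁻¹ * (‖κ‖ / r) ^ n := by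
  rcases Nat.eq_zero_or_pos n with rfl | hn
  · simp [hC.le]
  have hn1 : (1 : ℝ) ≤ n := by exact_mod_cast hn
  rw [norm_div, norm_div, norm_pow, Complex.norm_natCast]
  calc ‖κ‖ ^ n / n / ‖ζ ^ n - 1‖
      ≤ ‖κ‖ ^ n / 1 / (C * r ^ n) := by gcongr; exact hdio n hn
    _ = C⁻¹ * (‖κ‖ / r) ^ n := by rw [div_pow]; field_simp

theorem summable_norm_pow_div_natCast_div_pow_sub_one (hC : 0 < C) (hr : 0 < r)
    (hdio : ∀ n : ℕ, 1 ≤ n → C * r ^ n ≤ ‖ζ ^ n - 1‖) (hκ : ‖κ‖ < r) :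
    Summable fun n : ℕ => ‖κ ^ n / n / (ζ ^ n - 1)‖ :=
  ((summable_geometric_of_lt_one (by positivity) ((div_lt_one hr).2 hκ)).mul_left C⁻¹).of_nonneg_of_le
    (fun _ => norm_nonneg _) (norm_pow_div_natCast_div_pow_sub_one_le hC hr hdio)

theorem pow_ne_one_of_diophantine (hC : 0 < C) (hr : 0 < r)
    (hdio : ∀ n : ℕ, 1 ≤ n → C * r ^ n ≤ ‖ζ ^ n - 1‖) {n : ℕ} (hn : 1 ≤ n) : ζ ^ n ≠ 1 := by
  intro h
  have := hdio n hn
  rw [h, sub_self, norm_zero] at this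
  exact (mul_pos hC (pow_pos hr n)).not_ge this

end Diophantine

end

theorem log_coboundary_of_diophantine_general
    (ζ : ℂ) (hζ : ‖ζ‖ = 1)
    (C r : ℝ) (hC : 0 < C) (hr0 : 0 < r) (hr1 : r < 1)
    (hdio : ∀ n : ℕ, 1 ≤ n → C * r ^ n ≤ ‖ζ ^ n - 1‖)
    (κ : ℂ) (hκ : ‖κ‖ < r) :
    ∃ b : ℂ → ℝ, ContinuousOn b {ξ : ℂ | ‖ξ‖ = 1} ∧
      ∀ ξ : ℂ, ‖ξ‖ = 1 →
        Real.log ‖1 - ξ * κ‖ = b (ξ * ζ) - b ξ := by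
  set c : ℕ → ℂ := fun n => κ ^ n / n
  have hc : Summable fun n => ‖c n / (ζ ^ n - 1)‖ :=
    summable_norm_pow_div_natCast_div_pow_sub_one hC hr0 hdio hκ
  have hc_res : ∀ n, ζ ^ n = 1 → c n = 0 := by
    rintro (_ | n) h
    · simp [c] -- the constant term is `κ ^ 0 / 0 = 0` by Lean's convention `x / 0 = 0`
    · exact absurd h (pow_ne_one_of_diophantine hC hr0 hdio n.succ_pos)
  refine ⟨fun ξ => -(coboundarySeries ζ c ξ).re,
    (Complex.continuous_re.comp_continuousOn (continuousOn_coboundarySeries hc)).neg.mono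
      fun ξ hξ => mem_closedBall_zero_iff.2 (le_of_eq hξ),
    fun ξ hξ => ?_⟩
  have hlog : HasSum (fun n => c n * ξ ^ n) (-Complex.log (1 - ξ * κ)) := by
    convert Complex.hasSum_taylorSeries_neg_log (z := ξ * κ)
      (by rw [norm_mul, hξ, one_mul]; exact hκ.trans hr1) using 2 with n
    ring
  rw [neg_sub_neg, ← Complex.sub_re, ← neg_sub (coboundarySeries ζ c (ξ * ζ)),
    coboundarySeries_mul_sub hζ hc hc_res hξ.le,
    hlog.tsum_eq, neg_neg, Complex.log_re]

/-- If `ζ ∈ S¹` is not a root of unity and satisfies the Diophantine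
condition `|ζ^n − 1| ≥ C·rⁿ`, then for `|κ| < r` the function `ξ ↦ log|1 − ξκ|` on `S¹` is a
continuous coboundary for the rotation by `ζ`. -/
theorem log_coboundary_of_diophantine
    (ζ : ℂ) (hζ : ‖ζ‖ = 1) (hirr : ∀ n : ℕ, 1 ≤ n → ζ ^ n ≠ 1)
    (C r : ℝ) (hC : 0 < C) (hr0 : 0 < r) (hr1 : r < 1)
    (hdio : ∀ n : ℕ, 1 ≤ n → C * r ^ n ≤ ‖ζ ^ n - 1‖)
    (κ : ℂ) (hκ : ‖κ‖ < r) :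
    ∃ b : ℂ → ℝ, ContinuousOn b {ξ : ℂ | ‖ξ‖ = 1} ∧
      ∀ ξ : ℂ, ‖ξ‖ = 1 →
        Real.log ‖1 - ξ * κ‖ = b (ξ * ζ) - b ξ :=
  log_coboundary_of_diophantine_general ζ hζ C r hC hr0 hr1 hdio κ hκ
end

section
/- Let p ∈ ℤ[u] be monic and irreducible, and suppose p has a root ζ with |ζ| = 1 that is not a root of unity. Let M(p) denote the Mahler measure of p. Then M(p) > 1, and there is a constant C > 0 such that |ζ^n − 1| ≥ C·M(p)^{−n/2} for all n ≥ 1. -/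
/-!
Put `K = ℚ(ζ)`. Since `p` is irreducible, the embeddings `σ : K → ℂ` send `ζ` bijectively to the
roots of `p`, so `M(p) = ∏_σ max(1, |σ ζ|)`. For `n ≥ 1` the algebraic integer `ζ^n - 1` is
nonzero, so its norm `∏_σ |σ ζ^n - 1|` is a nonzero integer and hence at least `1`. As `ζ` is not
real, the inclusion and its complex conjugate are two distinct embeddings, both contributing
`|ζ^n - 1|`, while every factor is at most `2 max(1, |σ ζ|)^n`. This gives
`1 ≤ |ζ^n - 1|^2 2^d M(p)^n` with `d = [K : ℚ]`. Finally `M(p) > 1` is Kronecker's theorem: an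
integer polynomial of Mahler measure `1` has only roots of unity as nonzero roots.
-/

/-- The Mahler measure of an integer polynomial: the product of `max 1 |λ|` over its complex
roots `λ` (counted with multiplicity); for a monic polynomial this is the product of the
absolute values of the roots outside the closed unit disk. -/
noncomputable def mahlerMeasure (p : Polynomial ℤ) : ℝ :=
  ((p.map (Int.castRingHom ℂ)).roots.map fun lam => max 1 ‖lam‖).prod

open Polynomial IntermediateField

theorem IntermediateField.prod_algHom_apply_gen {F E L M : Type*} [Field F] [Field E] [Field L]
    [Algebra F E] [Algebra F L] [CommMonoid M] {α : E} (hα : IsSeparable F α)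
    [Fintype (F⟮α⟯ →ₐ[F] L)] (f : L → M) :
    ∏ φ : F⟮α⟯ →ₐ[F] L, f (φ (AdjoinSimple.gen F α)) = (((minpoly F α).aroots L).map f).prod := by
  classical
  rw [Fintype.prod_equiv (algHomAdjoinIntegralEquiv F hα.isIntegral) _ (fun x => f x)
      (fun φ => by
        rw [← algHomAdjoinIntegralEquiv_symm_apply_gen F hα.isIntegral, Equiv.symm_apply_apply]),
    Finset.prod_mem_multiset _ _ f (fun _ => rfl), Finset.prod_eq_multiset_prod,
    Multiset.toFinset_val, Multiset.dedup_eq_self.mpr (nodup_roots (Separable.map hα))]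

theorem Finset.prod_le_mul_mul_prod {ι R : Type*} [CommSemiring R] [PartialOrder R]
    [IsOrderedRing R] [DecidableEq ι] {s : Finset ι} {f g : ι → R} {i j : ι} (hi : i ∈ s)
    (hj : j ∈ s) (hij : i ≠ j)
    (hf : ∀ k ∈ s, 0 ≤ f k) (hfg : ∀ k ∈ s, f k ≤ g k) (hg : ∀ k ∈ s, 1 ≤ g k) :
    ∏ k ∈ s, f k ≤ f i * f j * ∏ k ∈ s, g k := by
  have hj' : j ∈ s.erase i := mem_erase.mpr ⟨hij.symm, hj⟩
  rw [← mul_prod_erase s f hi, ← mul_prod_erase _ f hj', ← mul_assoc]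
  have hsub : (s.erase i).erase j ⊆ s := (erase_subset _ _).trans (erase_subset _ _)
  gcongr
  · exact mul_nonneg (hf i hi) (hf j hj)
  · calc ∏ k ∈ (s.erase i).erase j, f k ≤ ∏ k ∈ (s.erase i).erase j, g k :=
          prod_le_prod (fun k hk => hf k (hsub hk)) (fun k hk => hfg k (hsub hk))
      _ ≤ ∏ k ∈ s, g k :=
          prod_le_prod_of_subset_of_one_le hsub (fun k hk => (zero_le_one.trans (hg k (hsub hk))))
            (fun k hk _ => hg k hk)

theorem norm_pow_sub_one_le {R : Type*} [SeminormedRing R] [NormOneClass R] (z : R) (n : ℕ) :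
    ‖z ^ n - 1‖ ≤ 2 * max 1 ‖z‖ ^ n := by
  have h1 : ‖z‖ ^ n ≤ max 1 ‖z‖ ^ n := by gcongr; exact le_max_right _ _
  have h2 : 1 ≤ max 1 ‖z‖ ^ n := one_le_pow₀ (le_max_left _ _)
  calc ‖z ^ n - 1‖ ≤ ‖z ^ n‖ + ‖(1 : R)‖ := norm_sub_le _ _
    _ ≤ ‖z‖ ^ n + 1 := by rw [norm_one]; gcongr; exact norm_pow_le z n
    _ ≤ 2 * max 1 ‖z‖ ^ n := by linarith

theorem Complex.sq_eq_one_of_conj_eq_self {z : ℂ} (hz : ‖z‖ = 1) (h : starRingEnd ℂ z = z) :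
    z ^ 2 = 1 := by
  rw [sq, ← congrArg (z * ·) h, Complex.mul_conj, Complex.normSq_eq_norm_sq, hz]
  norm_num

theorem Real.rpow_neg_half_le_of_one_le_sq_mul {a b : ℝ} (ha : 0 ≤ a) (hb : 0 < b)
    (h : 1 ≤ a ^ 2 * b) :
    b ^ (-(1 / 2) : ℝ) ≤ a := by
  rw [Real.rpow_neg hb.le, ← Real.sqrt_eq_rpow, inv_le_iff_one_le_mul₀ (Real.sqrt_pos.mpr hb)]
  refine (one_le_sq_iff₀ (by positivity)).mp ?_
  rwa [mul_pow, Real.sq_sqrt hb.le]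

namespace NumberField

variable {K : Type*} [Field K] [NumberField K]

theorem one_le_prod_norm_algHom {x : K} (hx : IsIntegral ℤ x) (hx0 : x ≠ 0) :
    1 ≤ ∏ φ : K →ₐ[ℚ] ℂ, ‖φ x‖ := by
  obtain ⟨x, rfl⟩ : ∃ y : 𝓞 K, (y : K) = x := ⟨⟨x, hx⟩, rfl⟩
  rw [← norm_prod, ← Algebra.norm_eq_prod_embeddings, ← Algebra.coe_norm_int, eq_ratCast,
    Rat.cast_intCast, Complex.norm_intCast]
  exact_mod_cast Int.one_le_abs (Algebra.norm_ne_zero_iff.mpr (by exact_mod_cast hx0))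

theorem one_le_norm_mul_norm_mul_prod_max_pow {g : K} (hg : IsIntegral ℤ g) {n : ℕ}
    (hgn : g ^ n ≠ 1) {φ₁ φ₂ : K →ₐ[ℚ] ℂ} (hne : φ₁ ≠ φ₂) :
    1 ≤ ‖φ₁ g ^ n - 1‖ * ‖φ₂ g ^ n - 1‖ *
      (2 ^ Fintype.card (K →ₐ[ℚ] ℂ) * (∏ ψ : K →ₐ[ℚ] ℂ, max 1 ‖ψ g‖) ^ n) := by
  classical
  have hx : IsIntegral ℤ (g ^ n - 1) := (hg.pow n).sub isIntegral_one
  have hψ (ψ : K →ₐ[ℚ] ℂ) : ψ (g ^ n - 1) = ψ g ^ n - 1 := by simp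
  calc (1 : ℝ) ≤ ∏ ψ : K →ₐ[ℚ] ℂ, ‖ψ (g ^ n - 1)‖ :=
        one_le_prod_norm_algHom hx (sub_ne_zero.mpr hgn)
    _ ≤ ‖φ₁ (g ^ n - 1)‖ * ‖φ₂ (g ^ n - 1)‖ * ∏ ψ : K →ₐ[ℚ] ℂ, 2 * max 1 ‖ψ g‖ ^ n :=
        Finset.prod_le_mul_mul_prod (Finset.mem_univ _) (Finset.mem_univ _) hne
          (fun _ _ => norm_nonneg _) (fun ψ _ => hψ ψ ▸ norm_pow_sub_one_le _ n)
          (fun ψ _ => one_le_two.trans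
            (le_mul_of_one_le_right zero_le_two (one_le_pow₀ (le_max_left _ _))))
    _ = _ := by
        rw [hψ, hψ, Finset.prod_mul_distrib, Finset.prod_const, Finset.prod_pow, Finset.card_univ]

end NumberField

theorem mahlerMeasure_eq_prod_aroots (p : ℤ[X]) :
    mahlerMeasure p = ((p.aroots ℂ).map fun z => max 1 ‖z‖).prod := by
  rw [_root_.mahlerMeasure, aroots_def, algebraMap_int_eq]

theorem one_lt_mahlerMeasure {p : ℤ[X]} (hp : p.Monic) {z : ℂ} (hz : z ∈ p.aroots ℂ) (hz0 : z ≠ 0)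
    (hzn : ∀ n : ℕ, 1 ≤ n → z ^ n ≠ 1) : 1 < mahlerMeasure p := by
  have hM : mahlerMeasure p = (p.map (Int.castRingHom ℂ)).mahlerMeasure := by
    rw [mahlerMeasure_eq_leadingCoeff_mul_prod_roots, leadingCoeff_map_of_injective
      (RingHom.injective_int _), hp.leadingCoeff, map_one, norm_one, one_mul, _root_.mahlerMeasure]
  refine (one_le_prod_max_one_norm_roots _).lt_of_ne fun h => ?_
  obtain ⟨n, hn, hpow⟩ := pow_eq_one_of_mahlerMeasure_eq_one (hM ▸ h.symm) hz0 hz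
  exact hzn n hn hpow

theorem minpoly_rat_eq_map {A : Type*} [Ring A] [Nontrivial A] [Algebra ℚ A] {p : ℤ[X]}
    (hp : p.Monic) (hirr : Irreducible p) {z : A} (hz : aeval z p = 0) :
    minpoly ℚ z = p.map (algebraMap ℤ ℚ) :=
  (minpoly.eq_of_irreducible_of_monic
    ((hp.irreducible_iff_irreducible_map_fraction_map (K := ℚ)).mp hirr)
    (by rwa [aeval_map_algebraMap]) (hp.map _)).symm

theorem mahlerMeasure_eq_prod_algHom {p : ℤ[X]} (hp : p.Monic) (hirr : Irreducible p) {z : ℂ}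
    (hz : aeval z p = 0) [Fintype (ℚ⟮z⟯ →ₐ[ℚ] ℂ)] :
    mahlerMeasure p = ∏ φ : ℚ⟮z⟯ →ₐ[ℚ] ℂ, max 1 ‖φ (AdjoinSimple.gen ℚ z)‖ := by
  have hint : IsIntegral ℚ z := (show IsIntegral ℤ z from ⟨p, hp, hz⟩).tower_top
  rw [mahlerMeasure_eq_prod_aroots, ← aroots_map ℂ ℚ, ← minpoly_rat_eq_map hp hirr hz]
  -- The instance is passed by hand: `ℚ⟮z⟯` carries two ℚ-algebra structures, equal only up to
  -- unfolding (`DivisionRing.toRatAlgebra` and the intermediate-field one).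
  exact (@prod_algHom_apply_gen ℚ ℂ ℂ ℝ _ _ _ _ _ _ z (minpoly.irreducible hint).separable ‹_›
    _).symm

/-- If `p ∈ ℤ[u]` is monic and irreducible with a root `ζ` on the unit
circle which is not a root of unity, then `M(p) > 1` and `|ζ^n − 1| ≥ C·M(p)^{−n/2}` for all
`n ≥ 1`, for some constant `C > 0`. -/
theorem root_of_unity_distance_bound
    (p : Polynomial ℤ) (hmonic : p.Monic) (hirr : Irreducible p)
    (ζ : ℂ) (hroot : Polynomial.aeval ζ p = 0) (habs : ‖ζ‖ = 1)
    (hru : ∀ n : ℕ, 1 ≤ n → ζ ^ n ≠ 1) :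
    1 < mahlerMeasure p ∧
      ∃ C : ℝ, 0 < C ∧ ∀ n : ℕ, 1 ≤ n →
        C * mahlerMeasure p ^ (-(n : ℝ) / 2) ≤ ‖ζ ^ n - 1‖ := by
  have hζ0 : ζ ≠ 0 := by rintro rfl; simp at habs
  have hζint : IsIntegral ℤ ζ := ⟨p, hmonic, hroot⟩
  have hM : 1 < mahlerMeasure p :=
    one_lt_mahlerMeasure hmonic (mem_aroots.mpr ⟨hmonic.ne_zero, hroot⟩) hζ0 hru
  refine ⟨hM, ?_⟩
  have : FiniteDimensional ℚ ℚ⟮ζ⟯ := adjoin.finiteDimensional hζint.tower_top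
  have : NumberField ℚ⟮ζ⟯ := ⟨⟩
  set g := AdjoinSimple.gen ℚ ζ
  set φ : ℚ⟮ζ⟯ →ₐ[ℚ] ℂ := ℚ⟮ζ⟯.val
  set φbar : ℚ⟮ζ⟯ →ₐ[ℚ] ℂ := ((starRingEnd ℂ).comp φ.toRingHom).toRatAlgHom
  have hφg : φ g = ζ := AdjoinSimple.algebraMap_gen ℚ ζ
  have hne : φ ≠ φbar := fun h => hru 2 one_le_two
    (Complex.sq_eq_one_of_conj_eq_self habs (congrArg (· g) h).symm)
  have hg : IsIntegral ℤ g := coe_isIntegral_iff.mp hζint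
  refine ⟨(2 ^ Fintype.card (ℚ⟮ζ⟯ →ₐ[ℚ] ℂ) : ℝ) ^ (-(1 / 2) : ℝ), by positivity, fun n hn => ?_⟩
  have hgn : g ^ n ≠ 1 := fun h => hru n hn (by simpa [hφg] using congrArg φ h)
  have hnorm := NumberField.one_le_norm_mul_norm_mul_prod_max_pow hg hgn hne
  rw [← mahlerMeasure_eq_prod_algHom hmonic hirr hroot] at hnorm
  have hφbar : ‖φbar g ^ n - 1‖ = ‖ζ ^ n - 1‖ := by
    rw [← Complex.norm_conj]; simp [φbar, φ, g]
  rw [hφg, hφbar] at hnorm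
  calc _ = (2 ^ Fintype.card (ℚ⟮ζ⟯ →ₐ[ℚ] ℂ) * mahlerMeasure p ^ n : ℝ) ^ (-(1 / 2) : ℝ) := by
        rw [Real.mul_rpow (by positivity) (by positivity), ← Real.rpow_natCast (mahlerMeasure p),
          ← Real.rpow_mul (by positivity)]
        ring_nf
    _ ≤ ‖ζ ^ n - 1‖ :=
        Real.rpow_neg_half_le_of_one_le_sq_mul (norm_nonneg _) (by positivity) (by rwa [sq])
end

section
/- Let Δ be a countable discrete group and let f ∈ ℤΔ be invertible in ℓ¹(Δ,ℝ) (equivalently, the principal algebraic Δ-action α_f is expansive). Let w^△ : Δ → ℝ be the ℓ¹-inverse of f*, where f*(δ) = f(δ⁻¹); let β : ℝ → ℝ/ℤ denote reduction modulo 1 applied coordinatewise; and define π : ℓ∞(Δ,ℤ) → (ℝ/ℤ)^Δ by π(u) = β(u·w^△), where (u·w^△)(γ) = Σ_{δ∈Δ} u(γδ⁻¹)·w^△(δ) is an absolutely convergent sum. Then: (1) π maps ℓ∞(Δ,ℤ) onto X_f, and in fact the restriction of π to { u ∈ ℓ∞(Δ,ℤ) : sup_δ |u(δ)| ≤ ‖f‖₁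 } is already surjective onto X_f, where ‖f‖₁ = Σ_{δ∈Δ} |f(δ)|; (2) for u ∈ ℓ∞(Δ,ℤ), π(u) = 0 if and only if u = ρ_f(u′) for some u′ ∈ ℓ∞(Δ,ℤ), where ρ_f(u′)(θ) = Σ_{δ∈Δ} u′(θδ)·f(δ). -/
/-! The `ℓ¹`-inverse `w` of `f*` makes `ρ_f` and `u ↦ u·w` mutually inverse on bounded real
functions, `ρ_f (u·w) = u` and `(ρ_f s)·w = s`: both are instances of associativity of convolution,
legitimate because one factor is finitely supported, one bounded and one summable. A point of
`(ℝ/ℤ)^Δ` with real lift `s` lies in `X_f` iff `ρ_f s` is integer-valued. Hence `π(u) ∈ X_f`; a point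
`t ∈ X_f` with lift `s ∈ [0,1)^Δ` equals `π(ρ_f s)`, where `|ρ_f s| ≤ ‖f‖₁`; and `π(u) = 0` iff
`u' = u·w` is integer-valued, in which case `u = ρ_f u'` and `‖u'‖_∞ ≤ ‖u‖_∞ ‖w‖₁`. -/

open MeasureTheory Filter



variable {Δ : Type*} [Group Δ]

variable [DecidableEq Δ]

lemma abs_mul_le_of_abs_le {a b C : ℝ} (ha : |a| ≤ C) : |a * b| ≤ C * |b| := by
  rw [abs_mul]
  exact mul_le_mul_of_nonneg_right ha (abs_nonneg b)

lemma summable_mul_of_abs_le {ι : Type*} {a b : ι → ℝ} {C : ℝ} (ha : ∀ i, |a i| ≤ C)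
    (hb : Summable fun i => |b i|) : Summable fun i => a i * b i :=
  (hb.mul_left C).of_norm_bounded fun i => abs_mul_le_of_abs_le (ha i)

lemma abs_tsum_mul_le {ι : Type*} {a b : ι → ℝ} {C : ℝ} (ha : ∀ i, |a i| ≤ C)
    (hb : Summable fun i => |b i|) : |∑' i, a i * b i| ≤ C * ∑' i, |b i| := by
  rw [← tsum_mul_left, ← Real.norm_eq_abs]
  exact tsum_of_norm_bounded (hb.mul_left C).hasSum fun i => abs_mul_le_of_abs_le (ha i)

lemma abs_intCast_le {ι : Type*} {u : ι → ℤ} {C : ℤ} (hu : ∀ i, |u i| ≤ C) (i : ι) :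
    |(u i : ℝ)| ≤ C := by
  exact_mod_cast hu i

lemma T1.coe_eq_zero_iff (x : ℝ) : (x : T1) = 0 ↔ ∃ n : ℤ, (n : ℝ) = x := by
  rw [AddCircle.coe_eq_zero_iff]
  simp

section Convolution

variable {G : Type*} [Group G]

/-- The convolution `u·w^△` of the paper. -/
noncomputable def convolve (u w : G → ℝ) (γ : G) : ℝ := ∑' δ, u (γ * δ⁻¹) * w δ

/-- The map `ρ_f`, extended to real-valued functions. -/
def rho (f : MonoidAlgebra ℤ G) (s : G → ℝ) (θ : G) : ℝ :=
  ∑ δ ∈ f.coeff.support, s (θ * δ) * f.coeff δ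

lemma convolve_eq_tsum (u w : G → ℝ) (γ : G) : convolve u w γ = ∑' η, u η * w (η⁻¹ * γ) := by
  rw [convolve, ← ((Equiv.inv G).trans (Equiv.mulRight γ)).tsum_eq]
  simp

lemma summable_abs_comp_inv_mul {w : G → ℝ} (hw : Summable fun δ => |w δ|) (x : G) :
    Summable fun η => |w (η⁻¹ * x)| :=
  ((Equiv.inv G).trans (Equiv.mulRight x)).summable_iff.2 hw

lemma summable_abs_comp_mul_left {w : G → ℝ} (hw : Summable fun δ => |w δ|) (x : G) :
    Summable fun η => |w (x * η)| :=
  (Equiv.mulLeft x).summable_iff.2 hw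

lemma coe_comp_mem_Xf_iff (f : MonoidAlgebra ℤ G) (s : G → ℝ) :
    (fun γ => (s γ : T1)) ∈ Xf f ↔ ∀ θ, (rho f s θ : T1) = 0 := by
  refine forall_congr' fun θ => Eq.congr_left ?_
  simp only [rho, QuotientAddGroup.mk_sum, ← AddCircle.coe_zsmul, zsmul_eq_mul, mul_comm]

lemma rho_intCast (f : MonoidAlgebra ℤ G) (u : G → ℤ) (θ : G) :
    rho f (fun γ => (u γ : ℝ)) θ = ((∑ δ ∈ f.coeff.support, u (θ * δ) * f.coeff δ : ℤ) : ℝ) := by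
  push_cast [rho]
  rfl

variable {f : MonoidAlgebra ℤ G} {w s : G → ℝ} {C : ℝ}

lemma abs_rho_le (hs : ∀ γ, |s γ| ≤ C) (θ : G) :
    |rho f s θ| ≤ C * ∑ δ ∈ f.coeff.support, |(f.coeff δ : ℝ)| := by
  rw [Finset.mul_sum]
  exact (Finset.abs_sum_le_sum_abs _ _).trans
    (Finset.sum_le_sum fun δ _ => abs_mul_le_of_abs_le (hs _))

lemma abs_convolve_le (hs : ∀ γ, |s γ| ≤ C) (hw : Summable fun δ => |w δ|) (γ : G) :
    |convolve s w γ| ≤ C * ∑' δ, |w δ| :=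
  abs_tsum_mul_le (fun _ => hs _) hw

lemma convolve_indicator_one [DecidableEq G] (s : G → ℝ) (γ : G) :
    convolve s (fun δ => if δ = 1 then 1 else 0) γ = s γ := by
  simp [convolve]

lemma rho_convolve_eq (hs : ∀ γ, |s γ| ≤ C) (hw : Summable fun δ => |w δ|) (θ : G) :
    rho f (convolve s w) θ = convolve s (rho f w) θ := by
  have hsum (ε : G) : Summable fun η => s η * w (η⁻¹ * (θ * ε)) * f.coeff ε :=
    (summable_mul_of_abs_le hs (summable_abs_comp_inv_mul hw (θ * ε))).mul_right _
  calc rho f (convolve s w) θ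
      = ∑ ε ∈ f.coeff.support, ∑' η, s η * w (η⁻¹ * (θ * ε)) * f.coeff ε := by
        simp only [rho, convolve_eq_tsum, tsum_mul_right]
    _ = ∑' η, s η * ∑ ε ∈ f.coeff.support, w (η⁻¹ * θ * ε) * f.coeff ε := by
        rw [← Summable.tsum_finsetSum fun ε _ => hsum ε]
        simp only [Finset.mul_sum, mul_assoc]
    _ = convolve s (rho f w) θ := by rw [convolve_eq_tsum]; rfl

lemma convolve_rho_eq (hs : ∀ γ, |s γ| ≤ C) (hw : Summable fun δ => |w δ|) (γ : G) :
    convolve (rho f s) w γ =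
      convolve s (fun δ => ∑ ε ∈ f.coeff.support, w (ε * δ) * f.coeff ε) γ := by
  have hshift (ε : G) : ∑' δ, s (γ * δ⁻¹ * ε) * w δ = ∑' δ, s (γ * δ⁻¹) * w (ε * δ) := by
    rw [← (Equiv.mulLeft ε).tsum_eq]
    simp [mul_assoc]
  calc convolve (rho f s) w γ
      = ∑' δ, ∑ ε ∈ f.coeff.support, s (γ * δ⁻¹ * ε) * w δ * f.coeff ε := by
        simp only [convolve, rho, Finset.sum_mul, mul_right_comm]
    _ = ∑ ε ∈ f.coeff.support, (∑' δ, s (γ * δ⁻¹) * w (ε * δ)) * f.coeff ε := by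
        rw [Summable.tsum_finsetSum fun ε _ =>
          (summable_mul_of_abs_le (fun δ => hs _) hw).mul_right _]
        simp only [tsum_mul_right, hshift]
    _ = convolve s (fun δ => ∑ ε ∈ f.coeff.support, w (ε * δ) * f.coeff ε) γ := by
        simp only [convolve, Finset.mul_sum, ← mul_assoc]
        rw [Summable.tsum_finsetSum fun ε _ =>
          (summable_mul_of_abs_le (fun δ => hs _) (summable_abs_comp_mul_left hw ε)).mul_right _]
        simp only [tsum_mul_right]

lemma sum_fstar_coeff (f : MonoidAlgebra ℤ G) (F : G → ℤ → ℝ) :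
    ∑ δ ∈ (fstar f).coeff.support, F δ ((fstar f).coeff δ) =
      ∑ ε ∈ f.coeff.support, F ε⁻¹ (f.coeff ε) :=
  Finsupp.sum_equivMapDomain (Equiv.inv G) f.coeff F

namespace IsL1Inverse

variable [DecidableEq G]

lemma rho_eq (hw : IsL1Inverse (fstar f) w) : rho f w = fun x => if x = 1 then 1 else 0 := by
  funext x
  simpa [rho, sum_fstar_coeff f fun δ n => w (x * δ⁻¹) * (n : ℝ)] using hw.2.2 x

lemma sum_apply_mul_mul_coeff (hw : IsL1Inverse (fstar f) w) :
    (fun x => ∑ ε ∈ f.coeff.support, w (ε * x) * f.coeff ε) =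
      fun x => if x = 1 then 1 else 0 := by
  funext x
  have := hw.2.1 x
  rw [sum_fstar_coeff f fun δ n => (n : ℝ) * w (δ⁻¹ * x)] at this
  simpa [mul_comm] using this

lemma rho_convolve (hw : IsL1Inverse (fstar f) w) (hs : ∀ γ, |s γ| ≤ C) (θ : G) :
    rho f (convolve s w) θ = s θ := by
  rw [rho_convolve_eq hs hw.1, hw.rho_eq, convolve_indicator_one]

lemma convolve_rho (hw : IsL1Inverse (fstar f) w) (hs : ∀ γ, |s γ| ≤ C) (γ : G) :
    convolve (rho f s) w γ = s γ := by
  rw [convolve_rho_eq hs hw.1, hw.sum_apply_mul_mul_coeff, convolve_indicator_one]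

lemma coe_convolve_mem_Xf (hw : IsL1Inverse (fstar f) w) {u : G → ℤ}
    (hu : ∀ γ, |(u γ : ℝ)| ≤ C) : (fun γ => (convolve (fun δ => (u δ : ℝ)) w γ : T1)) ∈ Xf f := by
  refine (coe_comp_mem_Xf_iff f _).2 fun θ => ?_
  rw [hw.rho_convolve hu]
  exact (T1.coe_eq_zero_iff _).2 ⟨u θ, rfl⟩

lemma exists_coe_convolve_eq (hw : IsL1Inverse (fstar f) w) {t : G → T1} (ht : t ∈ Xf f) :
    ∃ u : G → ℤ, (∀ δ, |u δ| ≤ ∑ δ' ∈ f.coeff.support, |f.coeff δ'|) ∧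
      (fun γ => (convolve (fun δ => (u δ : ℝ)) w γ : T1)) = t := by
  choose s hs01 hst using fun δ => AddCircle.eq_coe_Ico (t δ)
  have hs : ∀ δ, |s δ| ≤ 1 := fun δ => abs_le.2 ⟨by linarith [(hs01 δ).1], (hs01 δ).2.le⟩
  rw [← funext hst, coe_comp_mem_Xf_iff] at ht
  choose u hu using fun θ => (T1.coe_eq_zero_iff _).1 (ht θ)
  refine ⟨u, fun δ => ?_, funext fun γ => ?_⟩
  · have := abs_rho_le (f := f) hs δ
    rw [← hu, one_mul] at this
    exact_mod_cast this
  · rw [funext hu, hw.convolve_rho hs, hst]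

lemma coe_convolve_eq_zero_iff (hw : IsL1Inverse (fstar f) w) {u : G → ℤ}
    (hu : ∀ γ, |(u γ : ℝ)| ≤ C) :
    (fun γ => (convolve (fun δ => (u δ : ℝ)) w γ : T1)) = 0 ↔
      ∃ u' : G → ℤ, (∃ C : ℤ, ∀ δ, |u' δ| ≤ C) ∧
        u = fun θ => ∑ δ ∈ f.coeff.support, u' (θ * δ) * f.coeff δ := by
  constructor
  · intro h0
    choose u' hu' using fun γ => (T1.coe_eq_zero_iff _).1 (congrFun h0 γ)
    refine ⟨u', ⟨⌈C * ∑' δ, |w δ|⌉, fun γ => ?_⟩, funext fun θ => ?_⟩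
    · have := abs_convolve_le hu hw.1 γ
      rw [← hu'] at this
      exact_mod_cast this.trans (Int.le_ceil _)
    · have := hw.rho_convolve hu θ
      rw [← funext hu', rho_intCast] at this
      exact_mod_cast this.symm
  · rintro ⟨u', ⟨C', hC'⟩, rfl⟩
    funext γ
    rw [← funext (rho_intCast f u')]
    exact (T1.coe_eq_zero_iff _).2 ⟨u' γ, (hw.convolve_rho (abs_intCast_le hC') γ).symm⟩

end IsL1Inverse

end Convolution

theorem symbolic_cover_of_principal_action_general
    {Δ : Type*} [Group Δ] [DecidableEq Δ]
    (f : MonoidAlgebra ℤ Δ) (w : Δ → ℝ) (hw : IsL1Inverse (fstar f) w) :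
    (∀ u : Δ → ℤ, (∃ C : ℤ, ∀ δ, |u δ| ≤ C) →
      (fun γ : Δ => (↑(∑' δ : Δ, (u (γ * δ⁻¹) : ℝ) * w δ) : T1)) ∈ Xf f) ∧
    (∀ t ∈ Xf f, ∃ u : Δ → ℤ,
      (∀ δ, |u δ| ≤ ∑ δ' ∈ f.coeff.support, |f.coeff δ'|) ∧
      (fun γ : Δ => (↑(∑' δ : Δ, (u (γ * δ⁻¹) : ℝ) * w δ) : T1)) = t) ∧
    (∀ u : Δ → ℤ, (∃ C : ℤ, ∀ δ, |u δ| ≤ C) →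
      ((fun γ : Δ => (↑(∑' δ : Δ, (u (γ * δ⁻¹) : ℝ) * w δ) : T1)) = 0 ↔
        ∃ u' : Δ → ℤ, (∃ C : ℤ, ∀ δ, |u' δ| ≤ C) ∧
          u = fun θ : Δ => ∑ δ ∈ f.coeff.support, u' (θ * δ) * f.coeff δ)) := by
  exact ⟨fun u ⟨C, hC⟩ => hw.coe_convolve_mem_Xf (abs_intCast_le hC),
    fun t ht => hw.exists_coe_convolve_eq ht,
    fun u ⟨C, hC⟩ => hw.coe_convolve_eq_zero_iff (abs_intCast_le hC)⟩

/-- Deninger–Schmidt. Let `f ∈ ℤΔ` be invertible in `ℓ¹(Δ,ℝ)` with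
`w^△` the `ℓ¹`-inverse of `f*`, and let `π(u) = β(u·w^△)` for bounded `u : Δ → ℤ`. Then
`π` maps `ℓ∞(Δ,ℤ)` onto `X_f` (already on the set of `u` with `‖u‖_∞ ≤ ‖f‖₁`), and
`π(u) = 0` iff `u = ρ_f(u′)` for some bounded `u′ : Δ → ℤ`. -/
theorem symbolic_cover_of_principal_action
    {Δ : Type*} [Group Δ] [Countable Δ] [DecidableEq Δ]
    (f : MonoidAlgebra ℤ Δ) (w : Δ → ℝ) (hw : IsL1Inverse (fstar f) w) :
    (∀ u : Δ → ℤ, (∃ C : ℤ, ∀ δ, |u δ| ≤ C) →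
      (fun γ : Δ => (↑(∑' δ : Δ, (u (γ * δ⁻¹) : ℝ) * w δ) : T1)) ∈ Xf f) ∧
    (∀ t ∈ Xf f, ∃ u : Δ → ℤ,
      (∀ δ, |u δ| ≤ ∑ δ' ∈ f.coeff.support, |f.coeff δ'|) ∧
      (fun γ : Δ => (↑(∑' δ : Δ, (u (γ * δ⁻¹) : ℝ) * w δ) : T1)) = t) ∧
    (∀ u : Δ → ℤ, (∃ C : ℤ, ∀ δ, |u δ| ≤ C) →
      ((fun γ : Δ => (↑(∑' δ : Δ, (u (γ * δ⁻¹) : ℝ) * w δ) : T1)) = 0 ↔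
        ∃ u' : Δ → ℤ, (∃ C : ℤ, ∀ δ, |u' δ| ≤ C) ∧
          u = fun θ : Δ => ∑ δ ∈ f.coeff.support, u' (θ * δ) * f.coeff δ)) :=
  symbolic_cover_of_principal_action_general f w hw
end
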